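/- arXiv:math/0405474 — 5 statements merged into one kernel-verified Lean document; each statement's English description precedes it below -/
import Mathlib

section
/- Let α be a finite set with a distinguished element b. On the free 𝔽₂-vector space V with basis the subsets of α, define ν(S) = ∑_{x ∉ S} (S ∪ {x}) and X(S) = S \ {b} if b ∈ S, and X(S) = 0 if b ∉ S (both extended linearly). Then ν ∘ X + X ∘ ν = id on V. -/
/-!
Evaluate both composites on a basis vector `S`. If `b ∉ S`, then `X S = 0`, and in `X (ν S)`
only the summand `S ∪ {b}` survives, giving back `S`. If `b ∈ S`, then `ν (S \ {b})` is `S`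
plus the sets `(S \ {b}) ∪ {x}` with `x ∉ S`, and these are exactly the terms of `X (ν S)`;
over `𝔽₂` they cancel in pairs.
-/

open Finsupp

section

variable {α R : Type*} [Fintype α] [DecidableEq α] [Semiring R] {b : α}
  {ν X : (Finset α →₀ R) →ₗ[R] (Finset α →₀ R)}

theorem nu_X_single_of_mem
    (hν : ∀ S : Finset α, ν (single S 1) = ∑ x ∈ Sᶜ, single (insert x S) 1)
    (hX : ∀ S : Finset α, X (single S 1) = if b ∈ S then single (S.erase b) 1 else 0)
    {S : Finset α} (hb : b ∈ S) :
    ν (X (single S 1)) = single S 1 + ∑ x ∈ Sᶜ, single (insert x (S.erase b)) 1 := by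
  rw [hX, if_pos hb, hν, Finset.compl_erase, Finset.sum_insert (by simpa using hb),
    Finset.insert_erase hb]

theorem X_nu_single_of_mem
    (hν : ∀ S : Finset α, ν (single S 1) = ∑ x ∈ Sᶜ, single (insert x S) 1)
    (hX : ∀ S : Finset α, X (single S 1) = if b ∈ S then single (S.erase b) 1 else 0)
    {S : Finset α} (hb : b ∈ S) :
    X (ν (single S 1)) = ∑ x ∈ Sᶜ, single (insert x (S.erase b)) 1 := by
  rw [hν, map_sum]
  refine Finset.sum_congr rfl fun x hx => ?_
  have hxb : x ≠ b := by rintro rfl; exact Finset.mem_compl.mp hx hb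
  rw [hX, if_pos (Finset.mem_insert_of_mem hb), Finset.erase_insert_of_ne hxb]

theorem X_nu_single_of_notMem
    (hν : ∀ S : Finset α, ν (single S 1) = ∑ x ∈ Sᶜ, single (insert x S) 1)
    (hX : ∀ S : Finset α, X (single S 1) = if b ∈ S then single (S.erase b) 1 else 0)
    {S : Finset α} (hb : b ∉ S) :
    X (ν (single S 1)) = single S 1 := by
  have hterm : ∀ x ∈ Sᶜ, X (single (insert x S) 1) = if x = b then single S 1 else 0 := by
    intro x _
    rw [hX]
    by_cases hxb : x = b
    · subst hxb
      rw [if_pos (Finset.mem_insert_self x S), if_pos rfl, Finset.erase_insert hb]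
    · rw [if_neg (by simp [Ne.symm hxb, hb]), if_neg hxb]
  rw [hν, map_sum, Finset.sum_congr rfl hterm, Finset.sum_ite_eq' Sᶜ b,
    if_pos (Finset.mem_compl.mpr hb)]

end

/-- On the free `𝔽₂`-vector space with basis the subsets of a finite set `α` with a
distinguished element `b`, the flip map `ν` and the base-point map `X` satisfy
`ν ∘ X + X ∘ ν = id`. -/
theorem nu_X_homotopy {α : Type*} [Fintype α] [DecidableEq α] (b : α)
    (ν X : (Finset α →₀ ZMod 2) →ₗ[ZMod 2] (Finset α →₀ ZMod 2))
    (hν : ∀ S : Finset α,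
      ν (Finsupp.single S 1) = ∑ x ∈ Sᶜ, Finsupp.single (insert x S) 1)
    (hX : ∀ S : Finset α,
      X (Finsupp.single S 1) =
        if b ∈ S then Finsupp.single (S.erase b) 1 else 0) :
    ν ∘ₗ X + X ∘ₗ ν = LinearMap.id := by
  refine Finsupp.lhom_ext' fun S => LinearMap.ext_ring ?_
  simp only [LinearMap.comp_apply, Finsupp.lsingle_apply, LinearMap.add_apply,
    LinearMap.id_apply]
  by_cases hb : b ∈ S
  · rw [nu_X_single_of_mem hν hX hb, X_nu_single_of_mem hν hX hb, add_assoc,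
      ZModModule.add_self, add_zero]
  · rw [X_nu_single_of_notMem hν hX hb, hX, if_neg hb, map_zero, zero_add]
end

section
/- Let α be a nonempty finite set. Consider the cochain complex of 𝔽₂-vector spaces G^k (k = 0, …, |α|), where G^k is the free 𝔽₂-vector space on the k-element subsets of α and the differential μ^k : G^k → G^{k+1} sends a k-subset S to the sum of all (k+1)-subsets containing S. Then this complex is exact: ker μ^k = im μ^{k−1} for all k (with μ^{−1} = 0 and, in degree 0, ker μ^0 = 0; in top degree, μ^{n−1} is surjective). -/
/-!
Fix `a ∈ α`. Erasing `a` from the subsets that contain it is a contracting homotopy `κ`: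
if `a ∉ S`, the only coface of `S` containing `a` is `S ∪ {a}`, which erases back to `S`;
if `a ∈ S`, the cofaces `S ∪ {x}` (`x ∉ S`) of `S` erase to the cofaces `(S \ {a}) ∪ {x}` of
`S \ {a}`, which cancel in characteristic `2`, leaving its one remaining coface `S`.
Hence `κ μ + μ κ = id`, and exactness follows since `μ ∘ μ = 0`: every `(k+2)`-superset
of a `k`-set arises from it in exactly two ways.
-/

open Finset

theorem Finset.sum_sum_eq_zero_of_symm {ι M : Type*} [AddCommGroup M]
    [Module (ZMod 2) M] (s : Finset ι) (f : ι → ι → M) (hsymm : ∀ i j, f i j = f j i)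
    (hdiag : ∀ i, f i i = 0) :
    ∑ i ∈ s, ∑ j ∈ s, f i j = 0 := by
  rw [← sum_product']
  refine sum_involution (fun p _ => p.swap) (fun p _ => ?_) (fun p _ hp hswap => hp ?_)
    (fun p hp => ?_) (fun p _ => p.swap_swap)
  · rw [Prod.fst_swap, Prod.snd_swap, hsymm p.2, ZModModule.add_self]
  · rw [← congrArg Prod.fst hswap]
    exact hdiag _
  · exact mem_product.mpr (mem_product.mp hp).symm

theorem LinearMap.ker_eq_range_of_homotopy {R M N P : Type*} [Semiring R]
    [AddCommMonoid M] [AddCommMonoid N] [AddCommMonoid P] [Module R M] [Module R N] [Module R P]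
    {f : M →ₗ[R] N} {g : N →ₗ[R] P} (hgf : g ∘ₗ f = 0) (κ : N →ₗ[R] M) (κ' : P →ₗ[R] N)
    (hκ : κ' ∘ₗ g + f ∘ₗ κ = LinearMap.id) : ker g = range f := by
  refine le_antisymm (fun v hv => ⟨κ v, ?_⟩) (range_le_ker_iff.mpr hgf)
  have hv' := LinearMap.congr_fun hκ v
  rwa [add_apply, comp_apply, mem_ker.mp hv, map_zero, zero_add] at hv'

namespace FlipComplex

variable {α : Type*}

abbrev Cochain (α : Type*) (k : ℕ) := {S : Finset α // S.card = k} →₀ ZMod 2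

/-- Extended by zero to sets of the wrong cardinality, so that the formulas below hold
without cardinality side conditions. -/
noncomputable def basisVec (k : ℕ) (T : Finset α) : Cochain α k :=
  if h : T.card = k then Finsupp.single ⟨T, h⟩ 1 else 0

theorem basisVec_of_card_eq {k : ℕ} {T : Finset α} (h : T.card = k) :
    basisVec k T = Finsupp.single ⟨T, h⟩ 1 :=
  dif_pos h

theorem basisVec_of_card_ne {k : ℕ} {T : Finset α} (h : T.card ≠ k) : basisVec k T = 0 :=
  dif_neg h

theorem hom_ext {k : ℕ} {M : Type*} [AddCommMonoid M] [Module (ZMod 2) M]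
    {f g : Cochain α k →ₗ[ZMod 2] M}
    (h : ∀ S : Finset α, S.card = k → f (basisVec k S) = g (basisVec k S)) : f = g :=
  Finsupp.lhom_ext' fun S =>
    LinearMap.ext_ring (by simpa [basisVec_of_card_eq S.2] using h S S.2)

variable [Fintype α] [DecidableEq α]

noncomputable def d (k : ℕ) : Cochain α k →ₗ[ZMod 2] Cochain α (k + 1) :=
  Finsupp.linearCombination (ZMod 2) fun S => ∑ x ∈ S.1ᶜ, basisVec (k + 1) (insert x S.1)

noncomputable def contract (a : α) (k : ℕ) : Cochain α (k + 1) →ₗ[ZMod 2] Cochain α k :=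
  Finsupp.linearCombination (ZMod 2) fun S => if a ∈ S.1 then basisVec k (S.1.erase a) else 0

theorem d_basisVec (k : ℕ) (S : Finset α) :
    d k (basisVec k S) = ∑ x ∈ Sᶜ, basisVec (k + 1) (insert x S) := by
  by_cases hS : S.card = k
  · rw [basisVec_of_card_eq hS, d, Finsupp.linearCombination_single, one_smul]
  · rw [basisVec_of_card_ne hS, map_zero]
    refine (sum_eq_zero fun x hx => basisVec_of_card_ne ?_).symm
    rw [card_insert_of_notMem (mem_compl.mp hx)]
    omega

theorem d_basisVec_eq_sum_univ {k : ℕ} {S : Finset α} (hS : S.card ≤ k) :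
    d k (basisVec k S) = ∑ x, basisVec (k + 1) (insert x S) := by
  rw [d_basisVec]
  refine sum_subset (subset_univ _) fun x _ hx => basisVec_of_card_ne ?_
  rw [insert_eq_of_mem (notMem_compl.mp hx)]
  omega

theorem contract_basisVec (a : α) (k : ℕ) (T : Finset α) :
    contract a k (basisVec (k + 1) T) = if a ∈ T then basisVec k (T.erase a) else 0 := by
  by_cases hT : T.card = k + 1
  · rw [basisVec_of_card_eq hT, contract, Finsupp.linearCombination_single, one_smul]
  · rw [basisVec_of_card_ne hT, map_zero]
    split_ifs with ha
    · refine (basisVec_of_card_ne ?_).symm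
      rw [card_erase_of_mem ha]
      have := card_pos.mpr ⟨a, ha⟩
      omega
    · rfl

theorem contract_d_basisVec_of_notMem {a : α} {S : Finset α} (k : ℕ) (ha : a ∉ S) :
    contract a k (d k (basisVec k S)) = basisVec k S := by
  rw [d_basisVec, map_sum, sum_eq_single_of_mem a (mem_compl.mpr ha), contract_basisVec,
    if_pos (mem_insert_self a S), erase_insert ha]
  intro x _ hxa
  rw [contract_basisVec, if_neg]
  simp [Ne.symm hxa, ha]

theorem contract_d_basisVec_of_mem {a : α} {S : Finset α} (k : ℕ) (ha : a ∈ S) :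
    contract a k (d k (basisVec k S)) = ∑ x ∈ Sᶜ, basisVec k (insert x (S.erase a)) := by
  rw [d_basisVec, map_sum]
  refine sum_congr rfl fun x hx => ?_
  have hxa : x ≠ a := fun h => mem_compl.mp hx (h ▸ ha)
  rw [contract_basisVec, if_pos (mem_insert_of_mem ha), erase_insert_of_ne hxa]

theorem d_basisVec_erase {a : α} {S : Finset α} (k : ℕ) (ha : a ∈ S) :
    d k (basisVec k (S.erase a)) =
      basisVec (k + 1) S + ∑ x ∈ Sᶜ, basisVec (k + 1) (insert x (S.erase a)) := by
  rw [d_basisVec, compl_erase, sum_insert (by simp [ha]), insert_erase ha]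

theorem d_comp_d (k : ℕ) : d (k + 1) ∘ₗ d k = (0 : Cochain α k →ₗ[ZMod 2] _) := by
  refine hom_ext fun S hS => ?_
  rw [LinearMap.comp_apply, LinearMap.zero_apply, d_basisVec_eq_sum_univ hS.le, map_sum,
    sum_congr rfl fun x _ => d_basisVec_eq_sum_univ ((card_insert_le x S).trans (by omega))]
  refine sum_sum_eq_zero_of_symm _ _ (fun x y => by rw [insert_comm]) fun x => ?_
  rw [insert_idem, basisVec_of_card_ne]
  have := card_insert_le x S
  omega

theorem contract_comp_d_add_d_comp_contract (a : α) (k : ℕ) :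
    contract a (k + 1) ∘ₗ d (k + 1) + d k ∘ₗ contract a k = LinearMap.id := by
  refine hom_ext fun S _ => ?_
  rw [LinearMap.add_apply, LinearMap.comp_apply, LinearMap.comp_apply, LinearMap.id_apply,
    contract_basisVec]
  by_cases ha : a ∈ S
  · rw [if_pos ha, contract_d_basisVec_of_mem _ ha, d_basisVec_erase _ ha, add_left_comm,
      ZModModule.add_self, add_zero]
  · rw [if_neg ha, map_zero, add_zero, contract_d_basisVec_of_notMem _ ha]

theorem contract_comp_d_zero (a : α) :
    contract a 0 ∘ₗ d 0 = (LinearMap.id : Cochain α 0 →ₗ[ZMod 2] _) :=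
  hom_ext fun S hS => by
    rw [card_eq_zero.mp hS]
    exact contract_d_basisVec_of_notMem 0 (notMem_empty a)

theorem d_card_eq_zero : d (Fintype.card α) = (0 : Cochain α _ →ₗ[ZMod 2] _) :=
  hom_ext fun S hS => by
    rw [d_basisVec, (card_eq_iff_eq_univ S).mp hS, compl_univ, sum_empty, LinearMap.zero_apply]

theorem eq_d (μ : ∀ k : ℕ, Cochain α k →ₗ[ZMod 2] Cochain α (k + 1))
    (hμ : ∀ (k : ℕ) (S : Finset α) (hS : S.card = k),
      μ k (Finsupp.single ⟨S, hS⟩ 1) =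
        ∑ x ∈ Sᶜ.attach, Finsupp.single
          ⟨insert x.1 S, by
            rw [Finset.card_insert_of_notMem (Finset.mem_compl.mp x.2), hS]⟩ 1) :
    μ = d :=
  funext fun k => hom_ext fun S hS => by
    rw [d_basisVec, basisVec_of_card_eq hS, hμ, ← sum_attach Sᶜ]
    exact sum_congr rfl fun x _ => (basisVec_of_card_eq _).symm

end FlipComplex

open FlipComplex LinearMap in
/-- The subset-flip complex over `𝔽₂`: `G^k` is the free `𝔽₂`-vector space on the
`k`-element subsets of a nonempty finite set `α`, and `μ^k` sends a `k`-subset `S` to the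
sum of all `(k+1)`-subsets containing `S`.  This complex is exact: `ker μ^{k+1} = im μ^k`
for all `k`, `ker μ^0 = 0`, and `μ^{n-1}` is surjective (`n = |α|`). -/
theorem flip_complex_exact {α : Type*} [Fintype α] [DecidableEq α] [Nonempty α]
    (μ : ∀ k : ℕ, ({S : Finset α // S.card = k} →₀ ZMod 2) →ₗ[ZMod 2]
      ({S : Finset α // S.card = k + 1} →₀ ZMod 2))
    (hμ : ∀ (k : ℕ) (S : Finset α) (hS : S.card = k),
      μ k (Finsupp.single ⟨S, hS⟩ 1) =
        ∑ x ∈ Sᶜ.attach, Finsupp.single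
          ⟨insert x.1 S, by
            rw [Finset.card_insert_of_notMem (Finset.mem_compl.mp x.2), hS]⟩ 1) :
    (∀ k : ℕ, LinearMap.ker (μ (k + 1)) = LinearMap.range (μ k)) ∧
      LinearMap.ker (μ 0) = ⊥ ∧
      LinearMap.range (μ (Fintype.card α - 1)) = ⊤ := by
  obtain rfl : μ = d := eq_d μ hμ
  obtain ⟨a⟩ := ‹Nonempty α›
  have hexact (k : ℕ) : ker (d (k + 1)) = range (d (α := α) k) :=
    ker_eq_range_of_homotopy (d_comp_d k) (contract a k) (contract a (k + 1))
      (contract_comp_d_add_d_comp_contract a k)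
  refine ⟨hexact, ker_eq_bot_of_inverse (contract_comp_d_zero a), ?_⟩
  rw [← hexact, Nat.sub_add_cancel Fintype.card_pos, d_card_eq_zero, ker_zero]
end

section
/- Let n ≥ 1 and 0 ≤ k ≤ n−1. The inclusion matrix W over 𝔽₂, whose rows are indexed by k-element subsets and columns by (k+1)-element subsets of an n-element set, with entry 1 exactly when the k-subset is contained in the (k+1)-subset, has rank equal to the binomial coefficient C(n−1, k) over 𝔽₂. -/
/-!
Over a field of characteristic 2 the inclusion matrices `W k` form a chain complex,
`W k * W (k + 1) = 0`, because a `k`-set lies below a `(k + 2)`-set through exactly two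
intermediate sets. Removing a fixed point `x` is a contracting homotopy for this complex, so it is
exact and `rank (W k) + rank (W (k + 1)) = C(n, k + 1)`. Since `W k` has no columns for `k ≥ n`,
descending induction on `k` with Pascal's rule gives `rank (W k) = C(n - 1, k)`.
-/

open Finset Matrix

theorem Matrix.rank_add_rank_eq_card_of_homotopy {m n p K : Type*} [Fintype m] [Fintype n]
    [Fintype p] [DecidableEq n] [Field K] (A : Matrix m n K) (B : Matrix n p K)
    (H : Matrix n m K) (H' : Matrix p n K) (hAB : A * B = 0) (hH : H * A + B * H' = 1) :
    A.rank + B.rank = Fintype.card n := by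
  have hker : LinearMap.ker A.mulVecLin = LinearMap.range B.mulVecLin := by
    apply le_antisymm
    · intro v hv
      refine ⟨H' *ᵥ v, ?_⟩
      have hAv : A *ᵥ v = 0 := hv
      simpa [mulVec_mulVec, hAv, add_mulVec, ← mulVec_mulVec] using congrArg (· *ᵥ v) hH
    · rintro _ ⟨w, rfl⟩
      simp [mulVec_mulVec, hAB]
  rw [rank, rank, ← hker, LinearMap.finrank_range_add_finrank_ker,
    Module.finrank_fintype_fun_eq_card]

abbrev KSubset (α : Type*) (k : ℕ) := {S : Finset α // S.card = k}

def inclusionMatrix (R α : Type*) [Zero R] [One R] [DecidableEq α] (k : ℕ) :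
    Matrix (KSubset α k) (KSubset α (k + 1)) R :=
  of fun S T => if S.1 ⊆ T.1 then 1 else 0

def eraseMatrix (R : Type*) {α : Type*} [Zero R] [One R] [DecidableEq α] (x : α) (k : ℕ) :
    Matrix (KSubset α (k + 1)) (KSubset α k) R :=
  of fun T S => if x ∈ T.1 ∧ T.1.erase x = S.1 then 1 else 0

theorem Finset.eq_of_subset_insert_of_card_eq {α : Type*} [DecidableEq α] {x : α}
    {T U : Finset α} (hTU : T ⊆ insert x U) (hcard : T.card = U.card) (hx : x ∈ U ∨ x ∉ T) :
    T = U := by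
  refine eq_of_subset_of_card_le ?_ hcard.ge
  rcases hx with hx | hx
  · rwa [insert_eq_of_mem hx] at hTU
  · rwa [subset_insert_iff_of_notMem hx] at hTU

section

variable {R K α : Type*} [DecidableEq α] [Fintype α]

theorem Finset.Ioo_eq_filter_card_eq {S V : Finset α} {k : ℕ} (hS : S.card = k)
    (hV : V.card = k + 2) :
    Ioo S V = {T ∈ powersetCard (k + 1) (univ : Finset α) | S ⊆ T ∧ T ⊆ V} := by
  ext T
  simp only [mem_Ioo, mem_filter, mem_powersetCard_univ]
  constructor
  · rintro ⟨hST, hTV⟩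
    have := card_lt_card hST
    have := card_lt_card hTV
    exact ⟨by omega, hST.subset, hTV.subset⟩
  · rintro ⟨hT, hST, hTV⟩
    exact ⟨ssubset_of_subset_of_ne hST (by rintro rfl; omega),
      ssubset_of_subset_of_ne hTV (by rintro rfl; omega)⟩

theorem inclusionMatrix_mul_inclusionMatrix [Semiring R] [CharP R 2] (k : ℕ) :
    inclusionMatrix R α k * inclusionMatrix R α (k + 1) = 0 := by
  ext S V
  rw [mul_apply, Matrix.zero_apply]
  by_cases hSV : S.1 ⊆ V.1
  · calc ∑ T, inclusionMatrix R α k S T * inclusionMatrix R α (k + 1) T V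
        = ∑ T : KSubset α (k + 1), if S.1 ⊆ T.1 ∧ T.1 ⊆ V.1 then 1 else 0 := by
          simp only [inclusionMatrix, of_apply, ite_zero_mul_ite_zero, mul_one]
      _ = ∑ T ∈ powersetCard (k + 1) univ, if S.1 ⊆ T ∧ T ⊆ V.1 then (1 : R) else 0 :=
          (sum_subtype _ (fun _ => mem_powersetCard_univ) fun T =>
            if S.1 ⊆ T ∧ T ⊆ V.1 then (1 : R) else 0).symm
      _ = #(Ioo S.1 V.1) := by rw [Ioo_eq_filter_card_eq S.2 V.2, sum_boole]
      _ = 0 := by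
          rw [card_Ioo_finset hSV, V.2, S.2, show k + 1 + 1 - k = 2 by omega]
          exact CharP.cast_eq_zero R 2
  · refine Fintype.sum_eq_zero _ fun T => ?_
    have : ¬(S.1 ⊆ T.1 ∧ T.1 ⊆ V.1) := fun h => hSV (h.1.trans h.2)
    simp only [inclusionMatrix, of_apply, ite_zero_mul_ite_zero, mul_one, if_neg this]

theorem eraseMatrix_mul_inclusionMatrix_apply [Semiring R] (x : α) (k : ℕ)
    (T U : KSubset α (k + 1)) :
    (eraseMatrix R x k * inclusionMatrix R α k) T U =
      if x ∈ T.1 ∧ T.1 ⊆ insert x U.1 then 1 else 0 := by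
  rw [mul_apply]
  by_cases hx : x ∈ T.1
  · have hcard : (T.1.erase x).card = k := by simp [card_erase_of_mem hx, T.2]
    rw [Fintype.sum_eq_single ⟨T.1.erase x, hcard⟩]
    · simp [eraseMatrix, inclusionMatrix, hx, subset_insert_iff]
    · intro S hS
      have : T.1.erase x ≠ S.1 := fun h => hS (Subtype.ext h.symm)
      simp [eraseMatrix, this]
  · simp [eraseMatrix, hx]

theorem inclusionMatrix_mul_eraseMatrix_apply [Semiring R] (x : α) (k : ℕ)
    (T U : KSubset α (k + 1)) :
    (inclusionMatrix R α (k + 1) * eraseMatrix R x (k + 1)) T U =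
      if x ∉ U.1 ∧ T.1 ⊆ insert x U.1 then 1 else 0 := by
  rw [mul_apply]
  by_cases hx : x ∈ U.1
  · refine (Fintype.sum_eq_zero _ fun V => ?_).trans (by simp [hx])
    have : ¬(x ∈ V.1 ∧ V.1.erase x = U.1) := fun h => notMem_erase x V.1 (h.2 ▸ hx)
    simp [eraseMatrix, this]
  · have hcard : (insert x U.1).card = k + 2 := by simp [card_insert_of_notMem hx, U.2]
    rw [Fintype.sum_eq_single ⟨insert x U.1, hcard⟩]
    · simp [eraseMatrix, inclusionMatrix, hx]
    · intro V hV
      have : ¬(x ∈ V.1 ∧ V.1.erase x = U.1) := fun h =>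
        hV (Subtype.ext ((insert_erase h.1).symm.trans (congrArg (insert x) h.2)))
      simp [eraseMatrix, this]

theorem eraseMatrix_mul_inclusionMatrix_add_inclusionMatrix_mul_eraseMatrix [Semiring R]
    [CharP R 2] (x : α) (k : ℕ) :
    eraseMatrix R x k * inclusionMatrix R α k +
      inclusionMatrix R α (k + 1) * eraseMatrix R x (k + 1) = 1 := by
  ext T U
  rw [Matrix.add_apply, eraseMatrix_mul_inclusionMatrix_apply,
    inclusionMatrix_mul_eraseMatrix_apply, one_apply]
  by_cases hTU : T = U
  · subst hTU
    by_cases hx : x ∈ T.1 <;> simp [hx, subset_insert]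
  · have hne : T.1 ≠ U.1 := fun h => hTU (Subtype.ext h)
    have hcard : T.1.card = U.1.card := T.2.trans U.2.symm
    by_cases hsub : T.1 ⊆ insert x U.1
    · have hxU : x ∉ U.1 := fun hx => hne (eq_of_subset_insert_of_card_eq hsub hcard (.inl hx))
      have hxT : x ∈ T.1 :=
        by_contra fun hx => hne (eq_of_subset_insert_of_card_eq hsub hcard (.inr hx))
      simp [hxU, hxT, hsub, hTU, CharTwo.add_self_eq_zero]
    · simp [hsub, hTU]

theorem rank_inclusionMatrix_add_rank_inclusionMatrix_succ [Field K] [CharP K 2] [Nonempty α]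
    (k : ℕ) :
    (inclusionMatrix K α k).rank + (inclusionMatrix K α (k + 1)).rank =
      (Fintype.card α).choose (k + 1) := by
  obtain ⟨x⟩ := ‹Nonempty α›
  rw [rank_add_rank_eq_card_of_homotopy _ _ _ _ (inclusionMatrix_mul_inclusionMatrix k)
    (eraseMatrix_mul_inclusionMatrix_add_inclusionMatrix_mul_eraseMatrix x k),
    Fintype.card_finset_len]

theorem rank_inclusionMatrix_of_card_le [Field K] {k : ℕ} (hk : Fintype.card α ≤ k) :
    (inclusionMatrix K α k).rank = 0 := by
  have : IsEmpty (KSubset α (k + 1)) :=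
    ⟨fun T => by have := T.1.card_le_univ; omega⟩
  simpa using (inclusionMatrix K α k).rank_le_card_width

theorem rank_inclusionMatrix [Field K] [CharP K 2] [Nonempty α] (k : ℕ) :
    (inclusionMatrix K α k).rank = (Fintype.card α - 1).choose k := by
  obtain ⟨n, hn⟩ : ∃ n, Fintype.card α = n + 1 :=
    Nat.exists_eq_succ_of_ne_zero Fintype.card_ne_zero
  by_cases hk : Fintype.card α ≤ k
  · rw [rank_inclusionMatrix_of_card_le hk, Nat.choose_eq_zero_of_lt (by omega)]
  · have hsucc : (inclusionMatrix K α (k + 1)).rank = _ := rank_inclusionMatrix (k + 1)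
    have hsum := rank_inclusionMatrix_add_rank_inclusionMatrix_succ (K := K) (α := α) k
    rw [hn, Nat.choose_succ_succ'] at hsum
    rw [hn, Nat.add_sub_cancel] at hsucc ⊢
    omega
termination_by Fintype.card α - k

end

theorem inclusion_matrix_rank_general (n k : ℕ) (hn : 1 ≤ n) :
    (Matrix.of fun (S : {S : Finset (Fin n) // S.card = k})
        (T : {T : Finset (Fin n) // T.card = k + 1}) =>
      if S.1 ⊆ T.1 then (1 : ZMod 2) else 0).rank = Nat.choose (n - 1) k := by
  have : Nonempty (Fin n) := ⟨⟨0, hn⟩⟩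
  have h := rank_inclusionMatrix (K := ZMod 2) (α := Fin n) k
  rwa [Fintype.card_fin] at h

/-- The inclusion matrix over `𝔽₂` between `k`-subsets and `(k+1)`-subsets of an
`n`-element set has `𝔽₂`-rank equal to `C(n-1, k)`. -/
theorem inclusion_matrix_rank (n k : ℕ) (hn : 1 ≤ n) (hk : k ≤ n - 1) :
    (Matrix.of fun (S : {S : Finset (Fin n) // S.card = k})
        (T : {T : Finset (Fin n) // T.card = k + 1}) =>
      if S.1 ⊆ T.1 then (1 : ZMod 2) else 0).rank = Nat.choose (n - 1) k :=
  inclusion_matrix_rank_general n k hn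
end

section
/- Let α be a nonempty finite set and fix b ∈ α. In the free 𝔽₂-vector space on subsets of α, let 𝒢⁻ be the subspace spanned by subsets containing b, and let ν(S) = ∑_{x ∉ S} (S ∪ {x}) be the flip differential. Then: (1) 𝒢⁻ is ν-invariant and, as a complex graded by cardinality (shifted down by one), it is isomorphic to the flip complex on subsets of α \ {b}; (2) the quotient complex 𝒢/𝒢⁻ is also isomorphic to the flip complex on subsets of α \ {b}. -/
/-! Over any coefficient ring, `T ↦ T ∪ {b}` maps the basis of the flip complex on `α \ {b}`
bijectively onto the spanning set of `𝒢⁻`, and it commutes with the flip differentials, since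
the points outside `T ∪ {b}` are exactly the points of `α \ {b}` outside `T`. Modulo `𝒢⁻`, the
subsets avoiding `b` form a basis; the differential of such a subset `S` differs from the flip
differential of `S` inside `α \ {b}` by the single term `S ∪ {b}`, which lies in `𝒢⁻`. -/

open Finsupp Function

namespace FlipComplex

section Diff

variable (R : Type*) [Semiring R] (β : Type*) [Fintype β] [DecidableEq β]

noncomputable def flipDiff : (Finset β →₀ R) →ₗ[R] (Finset β →₀ R) :=
  linearCombination R fun S => ∑ x ∈ Sᶜ, single (insert x S) 1

variable {R β}

theorem flipDiff_single_one (S : Finset β) :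
    flipDiff R β (single S 1) = ∑ x ∈ Sᶜ, single (insert x S) 1 := by
  simp [flipDiff]

theorem eq_flipDiff {ν : (Finset β →₀ R) →ₗ[R] (Finset β →₀ R)}
    (hν : ∀ S, ν (single S 1) = ∑ x ∈ Sᶜ, single (insert x S) 1) : ν = flipDiff R β :=
  Finsupp.basisSingleOne.ext fun S => by simp [hν, flipDiff_single_one]

end Diff

section Pivot

variable {α : Type*} [DecidableEq α] (b : α)

def insertPivot (T : Finset {x // x ≠ b}) : Finset α :=
  insert b (T.map (Embedding.subtype _))

variable {b}

theorem subtype_map_subtype (T : Finset {x // x ≠ b}) :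
    (T.map (Embedding.subtype _)).subtype (· ≠ b) = T := by
  ext y; simp [y.2]

theorem subtype_insertPivot (T : Finset {x // x ≠ b}) :
    (insertPivot b T).subtype (· ≠ b) = T := by
  ext y; simp [insertPivot, y.2]

theorem insertPivot_injective : Injective (insertPivot b) :=
  LeftInverse.injective subtype_insertPivot

theorem insertPivot_subtype_erase {S : Finset α} (hb : b ∈ S) :
    insertPivot b ((S.erase b).subtype (· ≠ b)) = S := by
  rw [insertPivot, Finset.subtype_map_of_mem fun x hx => Finset.ne_of_mem_erase hx,
    Finset.insert_erase hb]

theorem range_insertPivot : Set.range (insertPivot b) = {S | b ∈ S} := by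
  ext S
  refine ⟨?_, fun hb => ⟨_, insertPivot_subtype_erase hb⟩⟩
  rintro ⟨T, rfl⟩
  exact Finset.mem_insert_self _ _

theorem mem_insertPivot (T : Finset {x // x ≠ b}) : b ∈ insertPivot b T :=
  Finset.mem_insert_self _ _

theorem insert_insertPivot (T : Finset {x // x ≠ b}) (y : {x // x ≠ b}) :
    insert (y : α) (insertPivot b T) = insertPivot b (insert y T) := by
  simp [insertPivot, Finset.insert_comm]

variable [Fintype α]

theorem compl_map_subtype (T : Finset {x // x ≠ b}) :
    (T.map (Embedding.subtype _))ᶜ = insert b (Tᶜ.map (Embedding.subtype _)) := by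
  ext x
  by_cases hx : x = b
  · subst hx; simp
  · simp [hx]

theorem compl_insertPivot (T : Finset {x // x ≠ b}) :
    (insertPivot b T)ᶜ = Tᶜ.map (Embedding.subtype _) := by
  rw [insertPivot, Finset.compl_insert, compl_map_subtype, Finset.erase_insert]
  simp

end Pivot

section Subcomplex

variable (R : Type*) [Semiring R] {α : Type*} (b : α)

noncomputable def pivotSubcomplex : Submodule R (Finset α →₀ R) :=
  Submodule.span R {f | ∃ S : Finset α, b ∈ S ∧ f = single S 1}

variable {R b} in
theorem single_mem_pivotSubcomplex {S : Finset α} (hb : b ∈ S) :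
    single S 1 ∈ pivotSubcomplex R b :=
  Submodule.subset_span ⟨S, hb, rfl⟩

variable [DecidableEq α]

theorem linearIndependent_single_insertPivot :
    LinearIndependent R fun T : Finset {x // x ≠ b} => single (insertPivot b T) (1 : R) :=
  Finsupp.basisSingleOne.linearIndependent.comp _ insertPivot_injective

theorem pivotSubcomplex_eq_span_range :
    pivotSubcomplex R b =
      Submodule.span R (Set.range fun T : Finset {x // x ≠ b} => single (insertPivot b T) 1) := by
  rw [pivotSubcomplex, Set.range_comp' (single · 1) (insertPivot b), range_insertPivot]
  congr 1
  ext f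
  simp [eq_comm]

noncomputable def pivotSubcomplexEquiv :
    pivotSubcomplex R b ≃ₗ[R] (Finset {x // x ≠ b} →₀ R) :=
  (LinearEquiv.ofEq _ _ (pivotSubcomplex_eq_span_range R b)).trans
    (linearIndependent_single_insertPivot R b).linearCombinationEquiv.symm

variable {R b}

theorem coe_pivotSubcomplexEquiv_symm (w : Finset {x // x ≠ b} →₀ R) :
    ((pivotSubcomplexEquiv R b).symm w : Finset α →₀ R) =
      linearCombination R (fun T => single (insertPivot b T) 1) w :=
  rfl

theorem pivotSubcomplexEquiv_single {S : Finset α} (hb : b ∈ S)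
    (hS : single S 1 ∈ pivotSubcomplex R b) :
    pivotSubcomplexEquiv R b ⟨single S 1, hS⟩ = single ((S.erase b).subtype (· ≠ b)) 1 := by
  rw [← LinearEquiv.eq_symm_apply, Subtype.ext_iff, coe_pivotSubcomplexEquiv_symm,
    linearCombination_single, one_smul, insertPivot_subtype_erase hb]

variable [Fintype α]

theorem flipDiff_single_insertPivot (T : Finset {x // x ≠ b}) :
    flipDiff R α (single (insertPivot b T) 1) =
      ∑ y ∈ Tᶜ, single (insertPivot b (insert y T)) 1 := by
  rw [flipDiff_single_one, compl_insertPivot, Finset.sum_map]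
  simp only [Embedding.subtype_apply, insert_insertPivot]

theorem flipDiff_comp_linearCombination_insertPivot :
    flipDiff R α ∘ₗ linearCombination R (fun T => single (insertPivot b T) 1) =
      linearCombination R (fun T => single (insertPivot b T) 1) ∘ₗ
        flipDiff R {x // x ≠ b} :=
  Finsupp.basisSingleOne.ext fun T => by
    simp only [LinearMap.comp_apply, Finsupp.coe_basisSingleOne, linearCombination_single,
      one_smul, flipDiff_single_insertPivot]
    simp only [flipDiff_single_one, map_sum, linearCombination_single, one_smul]

theorem flipDiff_pivotSubcomplexEquiv_symm (w : Finset {x // x ≠ b} →₀ R) :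
    flipDiff R α ((pivotSubcomplexEquiv R b).symm w) =
      (pivotSubcomplexEquiv R b).symm (flipDiff R _ w) := by
  simp only [coe_pivotSubcomplexEquiv_symm]
  exact LinearMap.congr_fun flipDiff_comp_linearCombination_insertPivot w

theorem flipDiff_mem_pivotSubcomplex {v : Finset α →₀ R} (hv : v ∈ pivotSubcomplex R b) :
    flipDiff R α v ∈ pivotSubcomplex R b := by
  have h := flipDiff_pivotSubcomplexEquiv_symm (pivotSubcomplexEquiv R b ⟨v, hv⟩)
  rw [LinearEquiv.symm_apply_apply] at h
  exact h ▸ Submodule.coe_mem _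

theorem pivotSubcomplexEquiv_flipDiff (v : pivotSubcomplex R b)
    (hv : flipDiff R α v ∈ pivotSubcomplex R b) :
    pivotSubcomplexEquiv R b ⟨flipDiff R α v, hv⟩ = flipDiff R _ (pivotSubcomplexEquiv R b v) := by
  rw [← LinearEquiv.eq_symm_apply, Subtype.ext_iff,
    ← flipDiff_pivotSubcomplexEquiv_symm, LinearEquiv.symm_apply_apply]

end Subcomplex

section Quotient

variable (R : Type*) [Ring R] {α : Type*} [DecidableEq α] (b : α)

noncomputable def pivotQuotientMap : (Finset α →₀ R) →ₗ[R] (Finset {x // x ≠ b} →₀ R) :=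
  linearCombination R fun S => if b ∈ S then 0 else single (S.subtype (· ≠ b)) 1

noncomputable def pivotQuotientSection : (Finset {x // x ≠ b} →₀ R) →ₗ[R] (Finset α →₀ R) :=
  linearCombination R fun T => single (T.map (Embedding.subtype _)) 1

variable {R b}

theorem pivotQuotientMap_single_of_mem {S : Finset α} (hb : b ∈ S) :
    pivotQuotientMap R b (single S 1) = 0 := by
  simp [pivotQuotientMap, hb]

theorem pivotQuotientMap_single_of_notMem {S : Finset α} (hb : b ∉ S) :
    pivotQuotientMap R b (single S 1) = single (S.subtype (· ≠ b)) 1 := by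
  simp [pivotQuotientMap, hb]

theorem pivotQuotientMap_single_map (T : Finset {x // x ≠ b}) :
    pivotQuotientMap R b (single (T.map (Embedding.subtype _)) 1) = single T 1 := by
  rw [pivotQuotientMap_single_of_notMem (by simp), subtype_map_subtype]

theorem pivotSubcomplex_le_ker : pivotSubcomplex R b ≤ LinearMap.ker (pivotQuotientMap R b) := by
  rw [pivotSubcomplex, Submodule.span_le]
  rintro _ ⟨S, hb, rfl⟩
  exact pivotQuotientMap_single_of_mem hb

theorem pivotQuotientMap_comp_section :
    pivotQuotientMap R b ∘ₗ pivotQuotientSection R b = LinearMap.id :=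
  Finsupp.basisSingleOne.ext fun T => by
    simp [pivotQuotientSection, pivotQuotientMap_single_map]

theorem mkQ_comp_section_comp_pivotQuotientMap :
    (pivotSubcomplex R b).mkQ ∘ₗ pivotQuotientSection R b ∘ₗ pivotQuotientMap R b =
      (pivotSubcomplex R b).mkQ := by
  refine Finsupp.basisSingleOne.ext fun S => ?_
  by_cases hb : b ∈ S
  · simp only [LinearMap.comp_apply, coe_basisSingleOne, pivotQuotientMap_single_of_mem hb,
      map_zero, Submodule.mkQ_apply]
    exact ((Submodule.Quotient.mk_eq_zero _).2 (single_mem_pivotSubcomplex hb)).symm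
  · simp [pivotQuotientMap_single_of_notMem hb, pivotQuotientSection,
      Finset.subtype_map_of_mem fun x hx => ne_of_mem_of_not_mem hx hb]

variable (R b) in
noncomputable def pivotQuotientEquiv :
    ((Finset α →₀ R) ⧸ pivotSubcomplex R b) ≃ₗ[R] (Finset {x // x ≠ b} →₀ R) :=
  LinearEquiv.ofLinearMap ((pivotSubcomplex R b).liftQ _ pivotSubcomplex_le_ker)
    ((pivotSubcomplex R b).mkQ ∘ₗ pivotQuotientSection R b)
    (by rw [← LinearMap.comp_assoc, Submodule.liftQ_mkQ, pivotQuotientMap_comp_section])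
    (Submodule.linearMap_qext _ <| by
      rw [LinearMap.comp_assoc, Submodule.liftQ_mkQ, LinearMap.comp_assoc,
        mkQ_comp_section_comp_pivotQuotientMap, LinearMap.id_comp])

theorem pivotQuotientEquiv_mk (v : Finset α →₀ R) :
    pivotQuotientEquiv R b (Submodule.Quotient.mk v) = pivotQuotientMap R b v :=
  rfl

variable [Fintype α]

theorem pivotQuotientMap_comp_flipDiff :
    pivotQuotientMap R b ∘ₗ flipDiff R α = flipDiff R _ ∘ₗ pivotQuotientMap R b := by
  refine Finsupp.basisSingleOne.ext fun S => ?_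
  simp only [LinearMap.comp_apply, coe_basisSingleOne]
  by_cases hb : b ∈ S
  · obtain ⟨T, rfl⟩ : ∃ T, insertPivot b T = S := ⟨_, insertPivot_subtype_erase hb⟩
    simp [flipDiff_single_insertPivot, pivotQuotientMap_single_of_mem, mem_insertPivot]
  · obtain ⟨T, rfl⟩ : ∃ T : Finset {x // x ≠ b}, T.map (Embedding.subtype _) = S :=
      ⟨_, Finset.subtype_map_of_mem fun x hx => ne_of_mem_of_not_mem hx hb⟩
    rw [flipDiff_single_one, compl_map_subtype, Finset.sum_insert (by simp), Finset.sum_map,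
      map_add, pivotQuotientMap_single_of_mem (Finset.mem_insert_self _ _), zero_add, map_sum,
      pivotQuotientMap_single_map, flipDiff_single_one]
    exact Finset.sum_congr rfl fun y _ => by
      rw [← Finset.map_insert, pivotQuotientMap_single_map]

theorem pivotQuotientMap_flipDiff (v : Finset α →₀ R) :
    pivotQuotientMap R b (flipDiff R α v) = flipDiff R _ (pivotQuotientMap R b v) := by
  rw [← LinearMap.comp_apply, pivotQuotientMap_comp_flipDiff, LinearMap.comp_apply]

end Quotient
end FlipComplex

open FlipComplex

/-- Inductive structure of the subset-flip complex: for a finite set `α` and `b ∈ α`,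
the subspace `𝒢⁻` spanned by the subsets containing `b` is invariant under the flip
differential `ν`, and both `𝒢⁻` (with cardinality grading shifted down by one) and the
quotient `𝒢/𝒢⁻` are isomorphic, as complexes, to the flip complex on subsets of
`α \ {b}` (with flip differential `ν'`). -/
theorem flip_subcomplex_and_quotient {α : Type*} [Fintype α] [DecidableEq α] (b : α)
    (ν : (Finset α →₀ ZMod 2) →ₗ[ZMod 2] (Finset α →₀ ZMod 2))
    (hν : ∀ S : Finset α,
      ν (Finsupp.single S 1) = ∑ x ∈ Sᶜ, Finsupp.single (insert x S) 1)
    (ν' : (Finset {x : α // x ≠ b} →₀ ZMod 2) →ₗ[ZMod 2]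
      (Finset {x : α // x ≠ b} →₀ ZMod 2))
    (hν' : ∀ T : Finset {x : α // x ≠ b},
      ν' (Finsupp.single T 1) = ∑ y ∈ Tᶜ, Finsupp.single (insert y T) 1)
    (G : Submodule (ZMod 2) (Finset α →₀ ZMod 2))
    (hG : G = Submodule.span (ZMod 2)
      {f | ∃ S : Finset α, b ∈ S ∧ f = Finsupp.single S 1}) :
    -- (1) `𝒢⁻` is `ν`-invariant
    (∀ v ∈ G, ν v ∈ G) ∧
    -- and, as a complex graded by cardinality (shifted down by one), it is isomorphic
    -- to the flip complex on subsets of `α \ {b}`: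
    (∃ e : G ≃ₗ[ZMod 2] (Finset {x : α // x ≠ b} →₀ ZMod 2),
      (∀ (S : Finset α) (_ : b ∈ S)
          (hmem : (Finsupp.single S 1 : Finset α →₀ ZMod 2) ∈ G),
        e ⟨Finsupp.single S 1, hmem⟩ =
          Finsupp.single ((S.erase b).subtype (· ≠ b)) 1) ∧
      (∀ (v : G) (hv : ν (v : Finset α →₀ ZMod 2) ∈ G), e ⟨ν v, hv⟩ = ν' (e v))) ∧
    -- (2) the quotient complex `𝒢/𝒢⁻` is also isomorphic to the flip complex on
    -- subsets of `α \ {b}`: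
    (∃ q : ((Finset α →₀ ZMod 2) ⧸ G) ≃ₗ[ZMod 2]
        (Finset {x : α // x ≠ b} →₀ ZMod 2),
      (∀ S : Finset α, b ∉ S →
        q (Submodule.Quotient.mk (Finsupp.single S 1)) =
          Finsupp.single (S.subtype (· ≠ b)) 1) ∧
      (∀ v : Finset α →₀ ZMod 2,
        q (Submodule.Quotient.mk (ν v)) = ν' (q (Submodule.Quotient.mk v)))) := by
  obtain rfl := eq_flipDiff hν
  obtain rfl := eq_flipDiff hν'
  obtain rfl : G = pivotSubcomplex (ZMod 2) b := hG
  refine ⟨fun _ => flipDiff_mem_pivotSubcomplex,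
    ⟨pivotSubcomplexEquiv _ b, fun _ => pivotSubcomplexEquiv_single,
      pivotSubcomplexEquiv_flipDiff⟩,
    ⟨pivotQuotientEquiv _ b, fun S hb => ?_, fun v => ?_⟩⟩
  · rw [pivotQuotientEquiv_mk, pivotQuotientMap_single_of_notMem hb]
  · rw [pivotQuotientEquiv_mk, pivotQuotientEquiv_mk, pivotQuotientMap_flipDiff]
end

section
/- Let h, g : ℤ × ℤ → ℕ be finitely supported and s an integer, and suppose h(i,j) = g(i,j) + g(i−1, j−4) + ε(i,j) for all (i,j), where ε(0, s−1) = ε(0, s+1) = 1 and ε(i,j) = 0 otherwise. Suppose moreover that h(i,j) = 0 whenever 2i − j ∉ {−s−1, −s+1}. Then g(i,j) = 0 unless j = 2i + s − 1; that is, writing a_i = g(i, 2i+s−1), one has h(i, 2i+s−1) = a_i + δ_{i,0} and h(i, 2i+s+1) = a_{i−1} + δ_{i,0}, and h vanishes everywhere else. -/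
/-!
Each coefficient `g (i, j)` is bounded by both `h (i, j)` and `h (i + 1, j + 4)`. These two
points lie on the diagonals `2i - j` and `2i - j - 2`, and both lie among the two diagonals
carrying `h` only when `2i - j = -s + 1`. Off that diagonal `g` therefore vanishes, and the
formulas for `h` are the decomposition with the vanishing terms dropped.
-/

theorem eq_zero_of_knight_le_of_thin {h g : ℤ × ℤ → ℕ} {s : ℤ}
    (hle : ∀ i j : ℤ, g (i, j) + g (i - 1, j - 4) ≤ h (i, j))
    (hthin : ∀ i j : ℤ, 2 * i - j ≠ -s - 1 → 2 * i - j ≠ -s + 1 → h (i, j) = 0)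
    {i j : ℤ} (hj : j ≠ 2 * i + s - 1) : g (i, j) = 0 := by
  have below : g (i, j) ≤ h (i, j) := (Nat.le_add_right _ _).trans (hle i j)
  have above : g (i, j) ≤ h (i + 1, j + 4) := by
    simpa using (Nat.le_add_left _ _).trans (hle (i + 1) (j + 4))
  by_cases hj' : j = 2 * i + s + 1
  · exact Nat.eq_zero_of_le_zero (above.trans_eq (hthin _ _ (by omega) (by omega)))
  · exact Nat.eq_zero_of_le_zero (below.trans_eq (hthin _ _ (by omega) (by omega)))

theorem knight_move_thin_general (h g : ℤ × ℤ → ℕ) (s : ℤ)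
    (hdecomp : ∀ i j : ℤ, h (i, j) = g (i, j) + g (i - 1, j - 4) +
      (if i = 0 ∧ (j = s - 1 ∨ j = s + 1) then 1 else 0))
    (hthin : ∀ i j : ℤ, 2 * i - j ≠ -s - 1 → 2 * i - j ≠ -s + 1 → h (i, j) = 0) :
    (∀ i j : ℤ, j ≠ 2 * i + s - 1 → g (i, j) = 0) ∧
      (∀ i : ℤ, h (i, 2 * i + s - 1) = g (i, 2 * i + s - 1) + (if i = 0 then 1 else 0)) ∧
      (∀ i : ℤ, h (i, 2 * i + s + 1) = g (i - 1, 2 * i + s - 3) + (if i = 0 then 1 else 0)) := by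
  have hle : ∀ i j : ℤ, g (i, j) + g (i - 1, j - 4) ≤ h (i, j) := fun i j => by
    rw [hdecomp]
    exact Nat.le_add_right _ _
  have hg : ∀ i j : ℤ, j ≠ 2 * i + s - 1 → g (i, j) = 0 := fun i j hj =>
    eq_zero_of_knight_le_of_thin hle hthin hj
  refine ⟨hg, fun i => ?_, fun i => ?_⟩
  · rw [hdecomp, hg (i - 1) _ (by omega), add_zero]
    simp only [show (i = 0 ∧ (2 * i + s - 1 = s - 1 ∨ 2 * i + s - 1 = s + 1)) ↔ i = 0 by omega]
  · rw [hdecomp, hg i _ (by omega), zero_add, show 2 * i + s + 1 - 4 = 2 * i + s - 3 by ring]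
    simp only [show (i = 0 ∧ (2 * i + s + 1 = s - 1 ∨ 2 * i + s + 1 = s + 1)) ↔ i = 0 by omega]

/-- Knight-move decomposition on two diagonals.  If
`h(i,j) = g(i,j) + g(i-1,j-4) + ε(i,j)` with `ε` supported at `(0, s±1)` with value `1`,
and `h` is supported on the two diagonals `2i - j ∈ {-s-1, -s+1}`, then `g` is
concentrated on the single diagonal `j = 2i + s - 1`; writing `a_i = g(i, 2i+s-1)` one
has `h(i, 2i+s-1) = a_i + δ_{i,0}` and `h(i, 2i+s+1) = a_{i-1} + δ_{i,0}`. -/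
theorem knight_move_thin (h g : ℤ × ℤ → ℕ) (s : ℤ)
    (hhfin : (Function.support h).Finite) (hgfin : (Function.support g).Finite)
    (hdecomp : ∀ i j : ℤ, h (i, j) = g (i, j) + g (i - 1, j - 4) +
      (if i = 0 ∧ (j = s - 1 ∨ j = s + 1) then 1 else 0))
    (hthin : ∀ i j : ℤ, 2 * i - j ≠ -s - 1 → 2 * i - j ≠ -s + 1 → h (i, j) = 0) :
    (∀ i j : ℤ, j ≠ 2 * i + s - 1 → g (i, j) = 0) ∧
      (∀ i : ℤ, h (i, 2 * i + s - 1) = g (i, 2 * i + s - 1) + (if i = 0 then 1 else 0)) ∧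
      (∀ i : ℤ, h (i, 2 * i + s + 1) = g (i - 1, 2 * i + s - 3) + (if i = 0 then 1 else 0)) :=
  knight_move_thin_general h g s hdecomp hthin
end
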